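/- There exists an infinite self-constructing set. -/

import Mathlib

/-- The e-th partial computable function in a standard numbering. -/
def phi (e : ℕ) : ℕ →. ℕ :=
  Nat.Partrec.Code.eval (Denumerable.ofNat Nat.Partrec.Code e)

/-- W e is the domain of the e-th partial computable function. -/
def W (e : ℕ) : Set ℕ := (phi e).Dom


/-- A set is computably enumerable iff it is W e for some e. -/
def CE (A : Set ℕ) : Prop := ∃ e, W e = A

/-- A nonempty c.e. set A is self-constructing if W e = A for every e ∈ A. -/
def SelfConstructing (A : Set ℕ) : Prop :=
  A.Nonempty ∧ CE A ∧ ∀ e ∈ A, W e = A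

/-!
By Kleene's recursion theorem there is a code `c` that knows its own curried versions: on input
`⟨k, x⟩` it searches for `j` with `x = encode (curry c j)` and halts iff it finds one. Then every
`curry c k` has as domain exactly the set `A` of indices of all `curry c j`, so `A` is
self-constructing, and it is infinite because `curry` is injective.
-/

open Nat.Partrec Nat.Partrec.Code Encodable

theorem Nat.rfind_some_decide_dom (p : ℕ → Prop) [DecidablePred p] :
    (Nat.rfind (fun j => Part.some (decide (p j)) : ℕ →. Bool)).Dom ↔ ∃ j, p j := by
  refine Nat.rfind_dom.trans ⟨fun ⟨j, hj, _⟩ => ⟨j, ?_⟩, fun ⟨j, hj⟩ => ⟨j, ?_, fun _ => trivial⟩⟩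
  · simpa [eq_comm (a := true)] using hj
  · simpa using hj

theorem W_encode (c : Code) : W (encode c) = c.eval.Dom := by
  simp only [W, phi, Denumerable.ofNat_encode]

theorem selfConstructing_of_forall_W_eq {A : Set ℕ} (hne : A.Nonempty)
    (hW : ∀ e ∈ A, W e = A) : SelfConstructing A :=
  ⟨hne, ⟨hne.some, hW _ hne.some_mem⟩, hW⟩

theorem exists_code_eval_curry_dom_iff :
    ∃ c : Code, ∀ k x, ((curry c k).eval x).Dom ↔ x ∈ Set.range fun j => encode (curry c j) := by
  let f : Code → ℕ →. ℕ := fun c n =>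
    Nat.rfind fun j => Part.some (decide (n.unpair.2 = encode (curry c j)))
  have hf : Partrec₂ f :=
    Partrec.rfind <| Computable₂.partrec₂ <| Primrec₂.to_comp <| PrimrecPred.decide <|
      Primrec.eq.comp (Primrec.snd.comp (Primrec.unpair.comp (Primrec.snd.comp Primrec.fst)))
        (Primrec.encode.comp (primrec₂_curry.comp (Primrec.fst.comp Primrec.fst) Primrec.snd))
  obtain ⟨c, hc⟩ := fixed_point₂ hf
  refine ⟨c, fun k x => ?_⟩
  rw [eval_curry, hc]
  simp only [f, Nat.unpair_pair, Nat.rfind_some_decide_dom, Set.mem_range, eq_comm]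

theorem stmt_12 : ∃ A : Set ℕ, SelfConstructing A ∧ A.Infinite := by
  obtain ⟨c, hc⟩ := exists_code_eval_curry_dom_iff
  refine ⟨Set.range fun j => encode (curry c j), ?_, ?_⟩
  · refine selfConstructing_of_forall_W_eq (Set.range_nonempty _) ?_
    rintro _ ⟨k, rfl⟩
    ext x
    rw [W_encode]
    exact hc k x
  · exact Set.infinite_range_of_injective fun a b h => (curry_inj (encode_injective h)).2
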